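/- arXiv:2502.14875 — 7 statements merged into one kernel-verified Lean document; each statement's English description precedes it below -/
import Mathlib

section
/- Let a, b, d be positive integers with gcd(a, b^2) squarefree. If d·b^4 − a^2 = n^2 for some positive integer n, then every prime divisor of b is congruent to 1 modulo 4. -/
lemma aux_odd {p : ℕ} (hp : p.Prime) (h3 : p % 4 = 3) {x y : ℕ}
    (h : p ∣ x ^ 2 + y ^ 2) : p ∣ x ∧ p ∣ y := by
  haveI : Fact p.Prime := ⟨hp⟩
  have hx : p ∣ x := by
    by_contra hx
    have hx0 : (x : ZMod p) ≠ 0 :=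
      fun h0 => hx ((ZMod.natCast_eq_zero_iff _ _).mp h0)
    have hz : (x : ZMod p) ^ 2 + (y : ZMod p) ^ 2 = 0 := by
      have : ((x ^ 2 + y ^ 2 : ℕ) : ZMod p) = 0 :=
        (ZMod.natCast_eq_zero_iff _ _).mpr h
      push_cast at this
      exact this
    have hx2 : (x : ZMod p) ^ 2 ≠ 0 := pow_ne_zero _ hx0
    have hy2 : (y : ZMod p) ^ 2 = -(x : ZMod p) ^ 2 := by linear_combination hz
    have hsq : ((y : ZMod p) * (x : ZMod p)⁻¹) ^ 2 = -1 := by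
      calc ((y : ZMod p) * (x : ZMod p)⁻¹) ^ 2
          = (y : ZMod p) ^ 2 * ((x : ZMod p) ^ 2)⁻¹ := by rw [mul_pow, inv_pow]
        _ = -((x : ZMod p) ^ 2) * ((x : ZMod p) ^ 2)⁻¹ := by rw [hy2]
        _ = -1 := by rw [neg_mul, mul_inv_cancel₀ hx2]
    have : IsSquare (-1 : ZMod p) :=
      ⟨(y : ZMod p) * (x : ZMod p)⁻¹, by rw [← hsq]; ring⟩
    exact (ZMod.exists_sq_eq_neg_one_iff.mp this) h3
  refine ⟨hx, hp.dvd_of_dvd_pow (n := 2) ?_⟩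
  have hx2 : p ∣ x ^ 2 := dvd_pow hx two_ne_zero
  exact (Nat.dvd_add_right hx2).mp h
lemma aux_two {x y : ℕ} (h : 4 ∣ x ^ 2 + y ^ 2) : 2 ∣ x ∧ 2 ∣ y := by
  rcases Nat.even_or_odd x with ⟨k, hk⟩ | ⟨k, hk⟩ <;>
    rcases Nat.even_or_odd y with ⟨m, hm⟩ | ⟨m, hm⟩ <;> subst hk hm
  · omega
  · exfalso
    have : (k + k) ^ 2 + (2 * m + 1) ^ 2 = 4 * (k ^ 2 + m ^ 2 + m) + 1 := by ring
    omega
  · exfalso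
    have : (2 * k + 1) ^ 2 + (m + m) ^ 2 = 4 * (k ^ 2 + k + m ^ 2) + 1 := by ring
    omega
  · exfalso
    have : (2 * k + 1) ^ 2 + (2 * m + 1) ^ 2 = 4 * (k ^ 2 + k + m ^ 2 + m) + 2 := by ring
    omega

lemma aux_step {p : ℕ} (hp : p.Prime) (hcase : p = 2 ∨ p % 4 = 3) {x y : ℕ}
    (h : p ^ 2 ∣ x ^ 2 + y ^ 2) : p ∣ x ∧ p ∣ y := by
  rcases hcase with rfl | h3
  · exact aux_two (by norm_num at h; exact h)
  · exact aux_odd hp h3 (dvd_trans (dvd_pow_self p two_ne_zero) h)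

/-- Lemma 3.6: if `gcd(a, b^2)` is squarefree and `d*b^4 - a^2` is a positive square,
then every prime divisor of `b` is congruent to `1` mod `4`. -/
theorem squares_in_recurrences_admissible_b
    (a b d n : ℕ) (ha : 0 < a) (hb : 0 < b) (hd : 0 < d) (hn : 0 < n)
    (hsf : Squarefree (Nat.gcd a (b ^ 2)))
    (heq : (d : ℤ) * (b : ℤ) ^ 4 - (a : ℤ) ^ 2 = (n : ℤ) ^ 2) :
    ∀ p : ℕ, p.Prime → p ∣ b → p % 4 = 1 := by
  intro p hp hpb
  have hN : d * b ^ 4 = a ^ 2 + n ^ 2 := by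
    have : (d : ℤ) * (b : ℤ) ^ 4 = (a : ℤ) ^ 2 + (n : ℤ) ^ 2 := by linarith
    exact_mod_cast this
  by_contra hne
  have hcase : p = 2 ∨ p % 4 = 3 := by
    have h2 : 2 ≤ p := hp.two_le
    have hm : p % 4 < 4 := Nat.mod_lt _ (by norm_num)
    have : p % 4 = 0 ∨ p % 4 = 1 ∨ p % 4 = 2 ∨ p % 4 = 3 := by omega
    rcases this with h0 | h1 | h2' | h3
    · exfalso
      have : 2 ∣ p := by omega
      have := (Nat.Prime.eq_one_or_self_of_dvd hp 2 this)
      omega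
    · exact absurd h1 hne
    · left
      have : 2 ∣ p := by omega
      rcases Nat.Prime.eq_one_or_self_of_dvd hp 2 this with h | h <;> omega
    · right; exact h3
  have hp4 : p ^ 4 ∣ a ^ 2 + n ^ 2 := by
    rw [← hN]
    exact Dvd.dvd.mul_left (pow_dvd_pow_of_dvd hpb 4) d
  have hp2 : p ^ 2 ∣ a ^ 2 + n ^ 2 := dvd_trans (pow_dvd_pow p (by norm_num)) hp4
  obtain ⟨hpa, hpn⟩ := aux_step hp hcase hp2
  obtain ⟨a1, rfl⟩ := hpa
  obtain ⟨n1, rfl⟩ := hpn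
  have hfac : (p * a1) ^ 2 + (p * n1) ^ 2 = p ^ 2 * (a1 ^ 2 + n1 ^ 2) := by ring
  have hp2' : p ^ 2 ∣ a1 ^ 2 + n1 ^ 2 := by
    rw [hfac] at hp4
    have hpos : 0 < p ^ 2 := pow_pos hp.pos 2
    have : p ^ 2 * p ^ 2 ∣ p ^ 2 * (a1 ^ 2 + n1 ^ 2) := by
      have : p ^ 2 * p ^ 2 = p ^ 4 := by ring
      rw [this]; exact hp4
    exact (mul_dvd_mul_iff_left (by positivity : (p:ℕ) ^ 2 ≠ 0)).mp this
  obtain ⟨hpa1, _⟩ := aux_step hp hcase hp2'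
  have hpsqa : p * p ∣ p * a1 := mul_dvd_mul_left p hpa1
  have hpsqb : p * p ∣ b ^ 2 := by
    have := mul_dvd_mul hpb hpb
    simpa [sq] using this
  have hdvdgcd : p * p ∣ Nat.gcd (p * a1) (b ^ 2) := Nat.dvd_gcd hpsqa hpsqb
  exact hp.one_lt.ne' (Nat.isUnit_iff.mp (hsf p hdvdgcd))
end

section
/- Let a, b, d be positive integers with gcd(a, b^2) squarefree and d·b^4 − a^2 a perfect square. If q is a prime with q ≡ 3 (mod 4), then q does not divide b. -/
lemma key_dvd {q : ℕ} (hq : q.Prime) (hq3 : q % 4 = 3) {x y : ℤ}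
    (h : (q : ℤ) ∣ x ^ 2 + y ^ 2) : (q : ℤ) ∣ x ∧ (q : ℤ) ∣ y := by
  haveI : Fact q.Prime := ⟨hq⟩
  have h0 : ((x : ZMod q)) ^ 2 + ((y : ZMod q)) ^ 2 = 0 := by
    have := (ZMod.intCast_zmod_eq_zero_iff_dvd _ q).mpr h
    push_cast at this
    exact this
  have hxy : ((x : ZMod q)) ^ 2 = -((y : ZMod q)) ^ 2 := by linear_combination h0
  have hy0 : ((y : ZMod q)) = 0 := by
    by_contra hy
    exact ZMod.mod_four_ne_three_of_sq_eq_neg_sq' hy hxy hq3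
  have hx0 : ((x : ZMod q)) = 0 := by
    have : ((x : ZMod q)) ^ 2 = 0 := by rw [hxy, hy0]; ring
    exact pow_eq_zero_iff (n := 2) (by norm_num) |>.mp this
  exact ⟨(ZMod.intCast_zmod_eq_zero_iff_dvd _ q).mp hx0,
         (ZMod.intCast_zmod_eq_zero_iff_dvd _ q).mp hy0⟩

/-- If `gcd(a, b^2)` is squarefree and `d*b^4 - a^2` is a positive square, then no
prime `q ≡ 3 (mod 4)` divides `b`. -/
theorem no_three_mod_four_prime_divides_b
    (a b d n : ℕ) (ha : 0 < a) (hb : 0 < b) (hd : 0 < d) (hn : 0 < n)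
    (hsf : Squarefree (Nat.gcd a (b ^ 2)))
    (heq : (d : ℤ) * (b : ℤ) ^ 4 - (a : ℤ) ^ 2 = (n : ℤ) ^ 2)
    (q : ℕ) (hq : q.Prime) (hq3 : q % 4 = 3) :
    ¬ q ∣ b := by
  intro hqb
  obtain ⟨c, hc⟩ := hqb
  have hq0 : (0:ℤ) < q := by exact_mod_cast hq.pos
  -- a^2 + n^2 = d * b^4
  have hsum : (a : ℤ) ^ 2 + (n : ℤ) ^ 2 = (d : ℤ) * (b : ℤ) ^ 4 := by linarith
  have h1 : (q : ℤ) ∣ (a : ℤ) ^ 2 + (n : ℤ) ^ 2 := by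
    rw [hsum, hc]; push_cast; exact ⟨d * (q^3 * c^4), by ring⟩
  obtain ⟨hqa, hqn⟩ := key_dvd hq hq3 h1
  obtain ⟨a', ha'⟩ := hqa
  obtain ⟨n', hn'⟩ := hqn
  have h2 : (q : ℤ) ∣ a' ^ 2 + n' ^ 2 := by
    have hE : (q:ℤ)^2 * (a'^2 + n'^2) = (q:ℤ)^2 * ((d:ℤ) * (q:ℤ)^2 * (c:ℤ)^4) := by
      have : ((b:ℤ)) = (q:ℤ)*(c:ℤ) := by exact_mod_cast congrArg (Nat.cast : ℕ → ℤ) hc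
      linear_combination hsum - (a:ℤ)*ha' - (q:ℤ)*a'*ha' - (n:ℤ)*hn' - (q:ℤ)*n'*hn' + ((d:ℤ)*((b:ℤ)^3 + (b:ℤ)^2*(q:ℤ)*(c:ℤ) + (b:ℤ)*(q:ℤ)^2*(c:ℤ)^2 + (q:ℤ)^3*(c:ℤ)^3))*this
    have := mul_left_cancel₀ (a := (q:ℤ)^2) (by positivity) hE
    rw [this]; exact ⟨(d:ℤ) * q * c^4, by ring⟩
  have hqa' : (q : ℤ) ∣ a' := (key_dvd hq hq3 h2).1
  have hq2a : (q : ℤ) * q ∣ (a : ℤ) := by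
    obtain ⟨a'', ha''⟩ := hqa'
    exact ⟨a'', by rw [ha', ha'']; ring⟩
  have hq2aN : q * q ∣ a := by exact_mod_cast hq2a
  have hq2b : q * q ∣ b ^ 2 := ⟨c ^ 2, by rw [hc]; ring⟩
  exact hq.prime.not_unit (hsf q (Nat.dvd_gcd hq2aN hq2b))
end

section
/- Let a, b, d be positive integers with gcd(a, b^2) squarefree and d·b^4 − a^2 = n^2 a positive perfect square. Then b is odd. -/
lemma zmod16_sq_add_sq (x y : ZMod 16) (h : x ^ 2 + y ^ 2 = 0) :
    x = 0 ∨ x = 4 ∨ x = 8 ∨ x = 12 := by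
  revert h; revert y; revert x; decide

/-- If `gcd(a, b^2)` is squarefree and `d*b^4 - a^2` is a positive square, then `b` is odd. -/
theorem b_odd_of_squarefree_gcd
    (a b d n : ℕ) (ha : 0 < a) (hb : 0 < b) (hd : 0 < d) (hn : 0 < n)
    (hsf : Squarefree (Nat.gcd a (b ^ 2)))
    (heq : (d : ℤ) * (b : ℤ) ^ 4 - (a : ℤ) ^ 2 = (n : ℤ) ^ 2) :
    Odd b := by
  rcases Nat.even_or_odd b with he | ho
  · exfalso
    obtain ⟨c, hc⟩ := he
    have hnat : a ^ 2 + n ^ 2 = 16 * (d * c ^ 4) := by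
      have h1 : (a : ℤ) ^ 2 + (n : ℤ) ^ 2 = (d : ℤ) * (b : ℤ) ^ 4 := by linarith
      have h2 : (a : ℤ) ^ 2 + (n : ℤ) ^ 2 = 16 * ((d : ℤ) * (c : ℤ) ^ 4) := by
        rw [h1, hc]; push_cast; ring
      exact_mod_cast h2
    have hz : ((a : ZMod 16)) ^ 2 + (n : ZMod 16) ^ 2 = 0 := by
      have := congrArg (Nat.cast : ℕ → ZMod 16) hnat
      push_cast at this
      rw [this]
      have : (16 : ZMod 16) = 0 := by decide
      rw [this]; ring
    have h4a : 4 ∣ a := by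
      rcases zmod16_sq_add_sq _ _ hz with h | h | h | h <;>
      · have hv := congrArg ZMod.val h
        rw [ZMod.val_natCast] at hv
        have h0 : ZMod.val (0 : ZMod 16) = 0 := by decide
        have h4 : ZMod.val (4 : ZMod 16) = 4 := by decide
        have h8 : ZMod.val (8 : ZMod 16) = 8 := by decide
        have h12 : ZMod.val (12 : ZMod 16) = 12 := by decide
        omega
    have h4b : 4 ∣ b ^ 2 := by
      rw [hc]; ring_nf; exact ⟨c^2, by ring⟩
    have h4g : 2 * 2 ∣ Nat.gcd a (b ^ 2) := Nat.dvd_gcd (by omega) (by omega)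
    have := hsf 2 h4g
    rw [Nat.isUnit_iff] at this
    omega
  · exact ho
end

section
/- Let the sequence y_k be defined by x_k + y_k√d = (a + b^2√d)·((t+u√d)/2)^{2k} with a, b, t, u, d positive integers, d nonsquare, ε = (t+u√d)/2 a unit of norm N_ε = ±1, and N_α = a^2 − b^4·d < 0. Then for all k > 0, y_k ≥ (|N_α|·u^2/(4b^2))·(d·u^2 − 3)^{k−1}. -/
set_option maxHeartbeats 1000000

private lemma yk_aux_du5 (d t u : ℕ) (hd : 0 < d) (ht : 0 < t) (hu : 0 < u)
    (hunit : (t : ℤ) ^ 2 - (d : ℤ) * (u : ℤ) ^ 2 = 4 ∨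
      (t : ℤ) ^ 2 - (d : ℤ) * (u : ℤ) ^ 2 = -4) :
    (5:ℤ) ≤ (d:ℤ) * (u:ℤ) ^ 2 := by
  have hd1 : (1:ℤ) ≤ (d:ℤ) := by exact_mod_cast hd
  have hu1' : (1:ℤ) ≤ (u:ℤ) := by exact_mod_cast hu
  have ht1' : (1:ℤ) ≤ (t:ℤ) := by exact_mod_cast ht
  have hdu1 : (1:ℤ) ≤ (d:ℤ) * (u:ℤ) ^ 2 := by nlinarith
  rcases hunit with h | h
  · by_contra hcon
    push_neg at hcon
    have ht8 : (t:ℤ) ^ 2 ≤ 8 := by linarith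
    have h6t : 6 * (t:ℤ) ≤ 17 := by nlinarith [sq_nonneg ((t:ℤ) - 3)]
    have ht2' : (t:ℤ) ≤ 2 := by omega
    nlinarith
  · nlinarith

private lemma yk_aux_base (A B T U D V : ℝ) (hA : 1 ≤ A) (hT : 1 ≤ T) (hU : 1 ≤ U)
    (hB2 : 0 < B ^ 2) (hdu : 5 ≤ D * U ^ 2) (hV : -1 ≤ V) (hN : 0 < B ^ 4 * D - A ^ 2) :
    B ^ 2 ≤ (A * T * U + B ^ 2 * (D * U ^ 2 + 2 * V)) / 2 ∧
    (B ^ 4 * D - A ^ 2) * U ^ 2 / (4 * B ^ 2) ≤ (A * T * U + B ^ 2 * (D * U ^ 2 + 2 * V)) / 2 := by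
  have hA0 : (0:ℝ) ≤ A := by linarith
  have hT0 : (0:ℝ) ≤ T := by linarith
  have hU0 : (0:ℝ) ≤ U := by linarith
  constructor
  · nlinarith [mul_le_mul_of_nonneg_left hdu hB2.le, mul_le_mul_of_nonneg_left hV hB2.le,
      mul_nonneg (mul_nonneg hA0 hT0) hU0]
  · rw [div_le_iff₀ (by positivity)]
    nlinarith [mul_le_mul_of_nonneg_left hdu (show (0:ℝ) ≤ B ^ 4 by positivity),
      mul_le_mul_of_nonneg_left hV (show (0:ℝ) ≤ 4 * B ^ 4 by positivity),
      mul_nonneg (mul_nonneg (mul_nonneg hA0 hB2.le) hT0) hU0,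
      sq_nonneg (A * U), sq_nonneg (B ^ 2)]

/-- Lemma 3.2(b): for `k > 0`, `y_k ≥ (|N_α|·u²/(4b²))·(d·u² - 3)^{k-1}`,
where `N_α = a² - b⁴·d < 0`. -/
theorem yk_lower_bound
    (a b d t u : ℕ) (ha : 0 < a) (hb : 0 < b) (hd : 0 < d) (ht : 0 < t) (hu : 0 < u)
    (hdns : ¬ IsSquare d)
    (hunit : (t : ℤ) ^ 2 - (d : ℤ) * (u : ℤ) ^ 2 = 4 ∨ (t : ℤ) ^ 2 - (d : ℤ) * (u : ℤ) ^ 2 = -4)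
    (hNalpha : (a : ℤ) ^ 2 - (b : ℤ) ^ 4 * (d : ℤ) < 0)
    (x y : ℤ → ℝ)
    (hxy : ∀ k : ℤ, x k + y k * Real.sqrt d
      = ((a : ℝ) + (b : ℝ) ^ 2 * Real.sqrt d) * (((t : ℝ) + (u : ℝ) * Real.sqrt d) / 2) ^ (2 * k))
    (hxy' : ∀ k : ℤ, x k - y k * Real.sqrt d
      = ((a : ℝ) - (b : ℝ) ^ 2 * Real.sqrt d) * (((t : ℝ) - (u : ℝ) * Real.sqrt d) / 2) ^ (2 * k)) :
    ∀ k : ℤ, 0 < k →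
      ((|(a : ℤ) ^ 2 - (b : ℤ) ^ 4 * (d : ℤ)| : ℤ) : ℝ) * (u : ℝ) ^ 2 / (4 * (b : ℝ) ^ 2)
        * ((d : ℝ) * (u : ℝ) ^ 2 - 3) ^ (k - 1) ≤ y k := by
  have hd0 : (0:ℝ) < (d:ℝ) := by exact_mod_cast hd
  have hs0 : (0:ℝ) < Real.sqrt d := Real.sqrt_pos.2 hd0
  obtain ⟨s, hsdef⟩ : ∃ s : ℝ, s = Real.sqrt d := ⟨_, rfl⟩
  rw [← hsdef] at hxy hxy' hs0
  have hs2 : s ^ 2 = (d:ℝ) := by rw [hsdef]; exact Real.sq_sqrt hd0.le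
  obtain ⟨F, hFdef⟩ : ∃ F : ℝ, F = ((t:ℝ) + (u:ℝ) * s) / 2 := ⟨_, rfl⟩
  obtain ⟨G, hGdef⟩ : ∃ G : ℝ, G = ((t:ℝ) - (u:ℝ) * s) / 2 := ⟨_, rfl⟩
  rw [← hFdef] at hxy
  rw [← hGdef] at hxy'
  -- the norm of the unit
  obtain ⟨ν, hν2, hνeq⟩ : ∃ ν : ℝ, ν ^ 2 = 1 ∧ (t:ℝ) ^ 2 - (d:ℝ) * (u:ℝ) ^ 2 = 4 * ν := by
    rcases hunit with h | h
    · exact ⟨1, by norm_num, by exact_mod_cast h⟩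
    · refine ⟨-1, by norm_num, ?_⟩
      have : ((t:ℝ) ^ 2 - (d:ℝ) * (u:ℝ) ^ 2) = -4 := by exact_mod_cast h
      linarith
  have hνub : ν ≤ 1 := by nlinarith [sq_nonneg (ν - 1)]
  have hνlb : -1 ≤ ν := by nlinarith [sq_nonneg (ν + 1)]
  have hFG : F * G = ν := by
    rw [hFdef, hGdef]
    linear_combination (-(u:ℝ)^2/4) * hs2 + (1/4) * hνeq
  have hν0 : ν ≠ 0 := by intro h; rw [h] at hν2; norm_num at hν2
  have hF0 : F ≠ 0 := by intro h; rw [h, zero_mul] at hFG; exact hν0 hFG.symm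
  have hG0 : G ≠ 0 := by intro h; rw [h, mul_zero] at hFG; exact hν0 hFG.symm
  have hFFGG : F * F * (G * G) = 1 := by
    linear_combination (F * G + ν) * hFG + hν2
  have hsum : F * F + G * G = (d:ℝ) * (u:ℝ) ^ 2 + 2 * ν := by
    rw [hFdef, hGdef]
    linear_combination ((u:ℝ)^2/2) * hs2 + (1/2) * hνeq
  -- basic formula for y
  have hy : ∀ k : ℤ, 2 * y k * s
      = ((a:ℝ) + (b:ℝ) ^ 2 * s) * F ^ (2 * k) - ((a:ℝ) - (b:ℝ) ^ 2 * s) * G ^ (2 * k) := by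
    intro k
    have h1 := hxy k
    have h2 := hxy' k
    linarith
  -- the recurrence
  have hrec : ∀ k : ℤ, y (k + 1) = ((d:ℝ) * (u:ℝ) ^ 2 + 2 * ν) * y k - y (k - 1) := by
    intro k
    have e1 := hy (k + 1)
    have e2 := hy k
    have e3 := hy (k - 1)
    have hFe : F ^ (2 * (k + 1)) = F ^ (2 * k) * (F * F) := by
      rw [show (2 * (k + 1) : ℤ) = 2 * k + 1 + 1 by ring, zpow_add_one₀ hF0,
        zpow_add_one₀ hF0]
      ring
    have hGe : G ^ (2 * (k + 1)) = G ^ (2 * k) * (G * G) := by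
      rw [show (2 * (k + 1) : ℤ) = 2 * k + 1 + 1 by ring, zpow_add_one₀ hG0,
        zpow_add_one₀ hG0]
      ring
    have hFe'aux : F ^ (2 * (k - 1)) * (F * F) = F ^ (2 * k) := by
      rw [show (2 * k : ℤ) = 2 * (k - 1) + 1 + 1 by ring, zpow_add_one₀ hF0,
        zpow_add_one₀ hF0]
      ring
    have hGe'aux : G ^ (2 * (k - 1)) * (G * G) = G ^ (2 * k) := by
      rw [show (2 * k : ℤ) = 2 * (k - 1) + 1 + 1 by ring, zpow_add_one₀ hG0,
        zpow_add_one₀ hG0]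
      ring
    have hFe' : F ^ (2 * (k - 1)) = F ^ (2 * k) * (G * G) := by
      calc F ^ (2 * (k - 1)) = F ^ (2 * (k - 1)) * (F * F * (G * G)) := by
            rw [hFFGG]; ring
        _ = (F ^ (2 * (k - 1)) * (F * F)) * (G * G) := by ring
        _ = F ^ (2 * k) * (G * G) := by rw [hFe'aux]
    have hGe' : G ^ (2 * (k - 1)) = G ^ (2 * k) * (F * F) := by
      calc G ^ (2 * (k - 1)) = G ^ (2 * (k - 1)) * (F * F * (G * G)) := by
            rw [hFFGG]; ring
        _ = (G ^ (2 * (k - 1)) * (G * G)) * (F * F) := by ring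
        _ = G ^ (2 * k) * (F * F) := by rw [hGe'aux]
    rw [hFe, hGe] at e1
    rw [hFe', hGe'] at e3
    have h6 : 2 * y (k + 1) * s
        = ((d:ℝ) * (u:ℝ) ^ 2 + 2 * ν) * (2 * y k * s) - 2 * y (k - 1) * s := by
      linear_combination e1 + e3 - ((d:ℝ) * (u:ℝ) ^ 2 + 2 * ν) * e2
        + (((a:ℝ) + (b:ℝ) ^ 2 * s) * F ^ (2 * k)
            - ((a:ℝ) - (b:ℝ) ^ 2 * s) * G ^ (2 * k)) * hsum
    have h7 : s * (y (k + 1) - (((d:ℝ) * (u:ℝ) ^ 2 + 2 * ν) * y k - y (k - 1))) = 0 := by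
      linear_combination h6 / 2
    rcases mul_eq_zero.1 h7 with h | h
    · exact absurd h hs0.ne'
    · linarith
  -- initial values
  have hy0 : y 0 = (b:ℝ) ^ 2 := by
    have e := hy 0
    norm_num at e
    have h7 : s * (y 0 - (b:ℝ) ^ 2) = 0 := by linear_combination e / 2
    rcases mul_eq_zero.1 h7 with h | h
    · exact absurd h hs0.ne'
    · linarith
  have hy1 : y 1 = ((a:ℝ) * t * u + (b:ℝ) ^ 2 * ((d:ℝ) * (u:ℝ) ^ 2 + 2 * ν)) / 2 := by
    have e := hy 1
    have hF2 : F ^ (2 * (1:ℤ)) = F * F := by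
      rw [show (2 * (1:ℤ)) = 1 + 1 by ring, zpow_add_one₀ hF0, zpow_one]
    have hG2 : G ^ (2 * (1:ℤ)) = G * G := by
      rw [show (2 * (1:ℤ)) = 1 + 1 by ring, zpow_add_one₀ hG0, zpow_one]
    rw [hF2, hG2, hFdef, hGdef] at e
    have h7 : s * (y 1 - ((a:ℝ) * t * u + (b:ℝ) ^ 2 * ((d:ℝ) * (u:ℝ) ^ 2 + 2 * ν)) / 2) = 0 := by
      linear_combination e / 2 + ((b:ℝ)^2 * s * (u:ℝ)^2 / 4) * hs2 + ((b:ℝ)^2 * s / 4) * hνeq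
    rcases mul_eq_zero.1 h7 with h | h
    · exact absurd h hs0.ne'
    · linarith
  -- numeric facts
  have ha1 : (1:ℝ) ≤ (a:ℝ) := by exact_mod_cast ha
  have hb1 : (1:ℝ) ≤ (b:ℝ) := by exact_mod_cast hb
  have ht1 : (1:ℝ) ≤ (t:ℝ) := by exact_mod_cast ht
  have hu1 : (1:ℝ) ≤ (u:ℝ) := by exact_mod_cast hu
  have hdu5Z : (5:ℤ) ≤ (d:ℤ) * (u:ℤ) ^ 2 := yk_aux_du5 d t u hd ht hu hunit
  have hdu5 : (5:ℝ) ≤ (d:ℝ) * (u:ℝ) ^ 2 := by exact_mod_cast hdu5Z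
  have hB : (0:ℝ) < (b:ℝ) ^ 4 * d - (a:ℝ) ^ 2 := by
    have : ((a:ℝ) ^ 2 - (b:ℝ) ^ 4 * d) < 0 := by exact_mod_cast hNalpha
    linarith
  have hb2 : (0:ℝ) < (b:ℝ) ^ 2 := by positivity
  obtain ⟨C, hCdef⟩ : ∃ C : ℝ,
      C = ((b:ℝ) ^ 4 * d - (a:ℝ) ^ 2) * (u:ℝ) ^ 2 / (4 * (b:ℝ) ^ 2) := ⟨_, rfl⟩
  obtain ⟨M, hMdef⟩ : ∃ M : ℝ, M = (d:ℝ) * (u:ℝ) ^ 2 - 3 := ⟨_, rfl⟩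
  have hM2 : (2:ℝ) ≤ M := by rw [hMdef]; linarith
  have hM0 : M ≠ 0 := by linarith
  have hC0 : 0 ≤ C := by rw [hCdef]; positivity
  -- main induction
  have main : ∀ k : ℤ, 1 ≤ k → 0 ≤ y (k - 1) ∧ y (k - 1) ≤ y k ∧ C * M ^ (k - 1) ≤ y k := by
    intro k hk
    refine Int.le_induction (motive := fun k _ => 0 ≤ y (k - 1) ∧ y (k - 1) ≤ y k ∧ C * M ^ (k - 1) ≤ y k)
      ?_ ?_ k hk
    ·
      show 0 ≤ y ((1:ℤ) - 1) ∧ y ((1:ℤ) - 1) ≤ y 1 ∧ C * M ^ ((1:ℤ) - 1) ≤ y 1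
      have h10 : ((1:ℤ) - 1) = 0 := rfl
      rw [h10, zpow_zero, mul_one, hy0, hy1, hCdef]
      obtain ⟨q1, q2⟩ := yk_aux_base (a:ℝ) (b:ℝ) (t:ℝ) (u:ℝ) (d:ℝ) ν ha1 ht1 hu1 hb2 hdu5 hνlb hB
      exact ⟨by positivity, q1, q2⟩
    · intro n hn ih
      show 0 ≤ y (n + 1 - 1) ∧ y (n + 1 - 1) ≤ y (n + 1) ∧ C * M ^ (n + 1 - 1) ≤ y (n + 1)
      obtain ⟨h1, h2, h3⟩ := ih
      have hrecn := hrec n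
      have hyn0 : 0 ≤ y n := le_trans h1 h2
      have hP1 : 0 ≤ (2 * ν + 2) * y n := mul_nonneg (by linarith) hyn0
      have hdu_yn : 5 * y n ≤ ((d:ℝ) * (u:ℝ) ^ 2) * y n :=
        mul_le_mul_of_nonneg_right hdu5 hyn0
      have step2 : M * y n ≤ y (n + 1) := by
        rw [hrecn, hMdef]
        linarith [hP1, h2]
      have hMpow : 0 ≤ M ^ (n - 1) := zpow_nonneg (by linarith) _
      have step1 : M * (C * M ^ (n - 1)) ≤ M * y n :=
        mul_le_mul_of_nonneg_left h3 (by linarith)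
      have hMstep : M ^ ((n:ℤ)) = M ^ (n - 1) * M := by
        have h := zpow_add_one₀ hM0 (n - 1)
        rw [show (n:ℤ) - 1 + 1 = n by ring] at h
        exact h
      refine ⟨by simpa using hyn0, ?_, ?_⟩
      · simp only [add_sub_cancel_right]
        rw [hrecn]
        linarith [hP1, h2, hdu_yn]
      · simp only [add_sub_cancel_right]
        calc C * M ^ (n:ℤ) = M * (C * M ^ (n - 1)) := by rw [hMstep]; ring
          _ ≤ M * y n := step1
          _ ≤ y (n + 1) := step2
  intro k hk
  obtain ⟨-, -, h3⟩ := main k (by linarith)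
  have habs : (|(a : ℤ) ^ 2 - (b : ℤ) ^ 4 * (d : ℤ)| : ℤ) = (b:ℤ) ^ 4 * d - (a:ℤ) ^ 2 := by
    rw [abs_of_neg hNalpha]; ring
  rw [habs]
  have hXe : ((((b:ℤ) ^ 4 * d - (a:ℤ) ^ 2 : ℤ)):ℝ) * (u:ℝ) ^ 2 / (4 * (b:ℝ) ^ 2)
      * ((d:ℝ) * (u:ℝ) ^ 2 - 3) ^ (k - 1) = C * M ^ (k - 1) := by
    rw [hCdef, hMdef]
    push_cast
    ring
  rw [hXe]
  exact h3
end

section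
/- Let y_k satisfy y_{k+1} = (d·u^2 + 2N_ε)·y_k − y_{k−1} with N_ε ∈ {1, −1}, y_0 > 0, and y_1 ≥ (d·u^2 − 3)·y_0 with d·u^2 ≥ 300. Then for all k ≥ 1, y_{k+1} ≥ 0.99·d·u^2·y_k, and hence y_k ≥ y_1·(0.99·d·u^2)^{k−1}. -/
/-- Growth estimate (Lemma 3.2(c)): with `d·u² ≥ 300` and `y₁ ≥ (d·u²-3)·y₀`, for `k ≥ 1` we
have `y_{k+1} ≥ 0.99·d·u²·y_k` and hence `y_k ≥ y₁·(0.99·d·u²)^{k-1}`. -/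
theorem yk_growth_estimate
    (d u : ℕ) (hd : 0 < d) (hu : 0 < u) (hdu : 300 ≤ d * u ^ 2)
    (Nε : ℝ) (hNε : Nε = 1 ∨ Nε = -1)
    (y : ℕ → ℝ) (h0 : 0 < y 0)
    (hrec : ∀ k : ℕ, y (k + 2) = ((d : ℝ) * (u : ℝ) ^ 2 + 2 * Nε) * y (k + 1) - y k)
    (h1 : ((d : ℝ) * (u : ℝ) ^ 2 - 3) * y 0 ≤ y 1) :
    (∀ k : ℕ, 1 ≤ k → 0.99 * ((d : ℝ) * (u : ℝ) ^ 2) * y k ≤ y (k + 1)) ∧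
    (∀ k : ℕ, 1 ≤ k → y 1 * (0.99 * ((d : ℝ) * (u : ℝ) ^ 2)) ^ (k - 1) ≤ y k) := by
  set D : ℝ := (d : ℝ) * (u : ℝ) ^ 2 with hDdef
  have hD : (300 : ℝ) ≤ D := by
    rw [hDdef]; exact_mod_cast hdu
  have hN2 : -2 ≤ 2 * Nε ∧ 2 * Nε ≤ 2 := by
    rcases hNε with h | h <;> rw [h] <;> norm_num
  have key : ∀ k : ℕ, 0 < y (k + 1) ∧ 0.99 * D * y (k + 1) ≤ y (k + 2) := by
    intro k
    induction k with
    | zero =>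
      have h1pos : 0 < y 1 := lt_of_lt_of_le (by nlinarith) h1
      constructor
      · exact h1pos
      · rw [hrec 0]
        nlinarith [mul_le_mul_of_nonneg_left h1 (show (0:ℝ) ≤ 0.01 * D - 2 by nlinarith)]
    | succ n ih =>
      obtain ⟨hp, hg⟩ := ih
      have hp2 : 0 < y (n + 2) := lt_of_lt_of_le (by nlinarith) hg
      refine ⟨hp2, ?_⟩
      rw [hrec (n + 1)]
      nlinarith [mul_le_mul_of_nonneg_left hg (show (0:ℝ) ≤ 0.01 * D - 2 by nlinarith)]
  have aux : ∀ m : ℕ, y 1 * (0.99 * D) ^ m ≤ y (m + 1) := by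
    intro m
    induction m with
    | zero => simp
    | succ n ih =>
      have hc : (0:ℝ) ≤ 0.99 * D := by nlinarith
      calc y 1 * (0.99 * D) ^ (n + 1) = 0.99 * D * (y 1 * (0.99 * D) ^ n) := by ring
        _ ≤ 0.99 * D * y (n + 1) := mul_le_mul_of_nonneg_left ih hc
        _ ≤ y (n + 2) := (key n).2
  refine ⟨fun k hk => ?_, fun k hk => ?_⟩
  · obtain ⟨m, rfl⟩ := Nat.exists_eq_add_of_le hk
    rw [show 1 + m = m + 1 by omega]
    exact (key m).2
  · obtain ⟨m, rfl⟩ := Nat.exists_eq_add_of_le hk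
    rw [show 1 + m = m + 1 by omega, Nat.add_sub_cancel]
    exact aux m
end

section
/- Let N be a negative integer whose absolute value is not required to be a square; write core(N) for the unique squarefree integer with N/core(N) a square. Set t' = core(N), u_2 = 2√(N/core(N)), and suppose x is an integer with u_1 = 2x. Define g_1 = gcd(u_1, u_2), g_2 = gcd(u_1/g_1, t'), g_3 ∈ {1,2,4} according to: g_3 = 1 if t' ≡ 1 (mod 4) and (u_1−u_2)/g_1 ≡ 0 (mod 2); g_3 = 2 if t' ≡ 3 (mod 4) and (u_1−u_2)/g_1 ≡ 0 (mod 2); g_3 = 4 otherwise; and g = g_1·√(g_2/g_3). Let d' = u_2^2·t'/g^2 = 4N/g^2 and 𝒩 = 2^{min(v_2(4N/g^2)/2, 3)} (where v_2 is the 2-adic valuation). Then 2 ≤ |g|·𝒩 ≤ 2√|N|. -/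
/-- Lemma 3.5: with `t' = core(N)` squarefree, `N = t'·s²`, `u₁ = 2x`, `u₂ = 2s`,
`g = g₁·√(g₂/g₃)` and `𝒩 = 2^{min(v₂(4N/g²)/2, 3)}`, we have `2 ≤ |g|·𝒩 ≤ 2√|N|`. -/
theorem g_N_bounds
    (N : ℤ) (hN : N < 0)
    (t' s : ℤ) (hsf : Squarefree t') (hs : 0 < s) (hNfac : N = t' * s ^ 2)
    (x : ℤ)
    (u1 u2 : ℤ) (hu1 : u1 = 2 * x) (hu2 : u2 = 2 * s)
    (g1 g2 g3 : ℤ)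
    (hg1 : g1 = (Int.gcd u1 u2 : ℤ))
    (hg2 : g2 = (Int.gcd (u1 / g1) t' : ℤ))
    (hg3 : g3 = if t' % 4 = 1 ∧ (u1 - u2) / g1 % 2 = 0 then 1
           else if t' % 4 = 3 ∧ (u1 - u2) / g1 % 2 = 0 then 2
           else 4)
    (g : ℝ) (hg : g = (g1 : ℝ) * Real.sqrt ((g2 : ℝ) / (g3 : ℝ)))
    (𝒩 : ℝ)
    (h𝒩 : 𝒩 = (2 : ℝ) ^ (min (((padicValRat 2 ((4 * N : ℚ) / ((g1 : ℚ) ^ 2 * (g2 : ℚ) / (g3 : ℚ))) : ℤ) : ℝ) / 2) 3)) :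
    2 ≤ |g| * 𝒩 ∧ |g| * 𝒩 ≤ 2 * Real.sqrt ((|N| : ℤ) : ℝ) := by
  have ht0 : t' ≠ 0 := by rintro rfl; simp at hNfac; omega
  have hu20 : u2 ≠ 0 := by omega
  -- g1 facts
  have hg1dvd : g1 ∣ u2 := hg1 ▸ Int.gcd_dvd_right u1 u2
  have hg1pos : 0 < g1 := by
    rw [hg1]
    exact_mod_cast Int.gcd_pos_of_ne_zero_right u1 hu20
  have hg1two : 2 ≤ g1 := by
    have h2 : (2:ℤ) ∣ g1 := hg1 ▸ Int.dvd_coe_gcd ⟨x, hu1⟩ ⟨s, hu2⟩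
    exact Int.le_of_dvd hg1pos h2
  -- g2 facts
  have hg2dvd : g2 ∣ t' := hg2 ▸ Int.gcd_dvd_right (u1 / g1) t'
  have hg2pos : 0 < g2 := by
    rw [hg2]
    exact_mod_cast Int.gcd_pos_of_ne_zero_right (u1 / g1) ht0
  have hg2one : 1 ≤ g2 := hg2pos
  -- g3 facts
  obtain ⟨c, hc2, hcg3⟩ : ∃ c : ℕ, c ≤ 2 ∧ g3 = 2 ^ c := by
    rw [hg3]; split_ifs
    · exact ⟨0, by norm_num⟩
    · exact ⟨1, by norm_num⟩
    · exact ⟨2, by norm_num⟩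
  have hg3pos : 0 < g3 := hcg3 ▸ pow_pos (by norm_num) c
  -- A, B
  obtain ⟨B, hB⟩ := hg1dvd
  obtain ⟨A, hA⟩ := hg2dvd
  have hB0 : B ≠ 0 := by rintro rfl; simp at hB; omega
  have hA0 : A ≠ 0 := by rintro rfl; simp at hA; exact ht0 hA
  set D : ℤ := A * B ^ 2 * g3 with hD
  have h4N : 4 * N = t' * u2 ^ 2 := by rw [hNfac, hu2]; ring
  have hDg : D * (g1 ^ 2 * g2) = 4 * N * g3 := by rw [h4N, hA, hB]; ring
  have hD0 : D ≠ 0 := by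
    simp only [hD, mul_ne_zero_iff]
    exact ⟨⟨hA0, pow_ne_zero 2 hB0⟩, hg3pos.ne'⟩
  have hDneg : D < 0 := by
    by_contra h
    push_neg at h
    have h1 : 0 ≤ D * (g1 ^ 2 * g2) :=
      mul_nonneg h (mul_nonneg (by positivity) hg2pos.le)
    rw [hDg] at h1
    nlinarith [mul_pos hg3pos (neg_pos.mpr hN)]
  -- the rational equals D
  haveI : Fact (Nat.Prime 2) := ⟨Nat.prime_two⟩
  have hg1q : ((g1:ℚ)) ≠ 0 := by exact_mod_cast hg1pos.ne'
  have hg2q : ((g2:ℚ)) ≠ 0 := by exact_mod_cast hg2pos.ne'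
  have hg3q : ((g3:ℚ)) ≠ 0 := by exact_mod_cast hg3pos.ne'
  have hQ : ((4 * N : ℚ) / ((g1 : ℚ) ^ 2 * (g2 : ℚ) / (g3 : ℚ))) = (D : ℚ) := by
    have hcast : (D:ℚ) * ((g1:ℚ)^2 * (g2:ℚ)) = 4 * (N:ℚ) * (g3:ℚ) := by exact_mod_cast hDg
    field_simp
    linear_combination -hcast
  set v : ℕ := padicValInt 2 D with hv
  have hval : padicValRat 2 ((4 * N : ℚ) / ((g1 : ℚ) ^ 2 * (g2 : ℚ) / (g3 : ℚ))) = (v : ℤ) := by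
    rw [hQ]; exact padicValRat.of_int
  have h𝒩' : 𝒩 = (2:ℝ) ^ (min ((v:ℝ)/2) 3) := by
    rw [h𝒩, hval]; norm_num
  -- c ≤ v
  have hcv : c ≤ v := by
    have hdvd : ((2:ℕ):ℤ) ^ c ∣ D := by
      rw [hcg3] at hD
      exact ⟨A * B ^ 2, by rw [hD]; push_cast; ring⟩
    rcases (padicValInt_dvd_iff c D).mp hdvd with h | h
    · exact absurd h hD0
    · exact h
  have hvdvd : (2:ℤ) ^ v ≤ -D := by
    refine Int.le_of_dvd (by omega) (dvd_neg.mpr ?_)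
    exact_mod_cast padicValInt_dvd (p := 2) D
  -- real facts
  set m : ℝ := min ((v:ℝ)/2) 3 with hm
  have hm0 : 0 ≤ m := le_min (by positivity) (by norm_num)
  have hmc : (c:ℝ)/2 ≤ m := by
    refine le_min ?_ ?_
    · have : (c:ℝ) ≤ (v:ℝ) := by exact_mod_cast hcv
      linarith
    · have : (c:ℝ) ≤ 2 := by exact_mod_cast hc2
      linarith
  have hg3r : (g3:ℝ) = 2 ^ c := by exact_mod_cast hcg3
  have hsqrtg3 : Real.sqrt (g3:ℝ) = (2:ℝ) ^ ((c:ℝ)/2) := by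
    rw [hg3r, Real.sqrt_eq_rpow, ← Real.rpow_natCast 2 c, ← Real.rpow_mul (by norm_num)]
    congr 1
    ring
  have h𝒩ge : Real.sqrt (g3:ℝ) ≤ 𝒩 := by
    rw [h𝒩', hsqrtg3]
    exact (Real.rpow_le_rpow_left_iff (by norm_num)).mpr hmc
  have hg1r : (0:ℝ) < (g1:ℝ) := by exact_mod_cast hg1pos
  have hg2r : (0:ℝ) < (g2:ℝ) := by exact_mod_cast hg2pos
  have hg3r' : (0:ℝ) < (g3:ℝ) := by exact_mod_cast hg3pos
  have hgpos : 0 ≤ g := by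
    rw [hg]; exact mul_nonneg hg1r.le (Real.sqrt_nonneg _)
  have habsg : |g| = g := abs_of_nonneg hgpos
  have hsqrt_prod : Real.sqrt ((g2:ℝ)/(g3:ℝ)) * Real.sqrt (g3:ℝ) = Real.sqrt (g2:ℝ) := by
    rw [← Real.sqrt_mul (div_nonneg hg2r.le hg3r'.le), div_mul_cancel₀ _ hg3r'.ne']
  constructor
  · -- lower bound
    have h1 : g * Real.sqrt (g3:ℝ) = (g1:ℝ) * Real.sqrt (g2:ℝ) := by
      rw [hg, mul_assoc, hsqrt_prod]
    have h2 : (1:ℝ) ≤ Real.sqrt (g2:ℝ) := by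
      rw [show (1:ℝ) = Real.sqrt 1 by simp]
      exact Real.sqrt_le_sqrt (by exact_mod_cast hg2one)
    have h3 : (2:ℝ) ≤ (g1:ℝ) := by exact_mod_cast hg1two
    calc (2:ℝ) ≤ (g1:ℝ) * Real.sqrt (g2:ℝ) := by nlinarith
      _ = g * Real.sqrt (g3:ℝ) := h1.symm
      _ ≤ g * 𝒩 := by
          refine mul_le_mul_of_nonneg_left h𝒩ge hgpos
      _ = |g| * 𝒩 := by rw [habsg]
  · -- upper bound
    have h𝒩le : 𝒩 ≤ Real.sqrt (-(D:ℝ)) := by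
      have h1 : 𝒩 ≤ (2:ℝ) ^ ((v:ℝ)/2) := by
        rw [h𝒩']
        exact (Real.rpow_le_rpow_left_iff (by norm_num)).mpr (min_le_left _ _)
      have h2 : (2:ℝ) ^ ((v:ℝ)/2) = Real.sqrt ((2:ℝ) ^ (v:ℕ)) := by
        rw [Real.sqrt_eq_rpow, ← Real.rpow_natCast 2 v, ← Real.rpow_mul (by norm_num)]
        congr 1
        ring
      have h3 : ((2:ℝ) ^ (v:ℕ)) ≤ -(D:ℝ) := by exact_mod_cast hvdvd
      calc 𝒩 ≤ Real.sqrt ((2:ℝ) ^ (v:ℕ)) := h2 ▸ h1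
        _ ≤ Real.sqrt (-(D:ℝ)) := Real.sqrt_le_sqrt h3
    have hDr : (0:ℝ) < -(D:ℝ) := by
      have : (D:ℝ) < 0 := by exact_mod_cast hDneg
      linarith
    have hkey : (g1:ℝ)^2 * ((g2:ℝ)/(g3:ℝ) * -(D:ℝ)) = 2^2 * (-(N:ℝ)) := by
      have hcast : (D:ℝ) * ((g1:ℝ)^2 * (g2:ℝ)) = 4 * (N:ℝ) * (g3:ℝ) := by exact_mod_cast hDg
      have hg3ne : ((g3:ℝ)) ≠ 0 := hg3r'.ne'
      field_simp
      linear_combination -hcast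
    have hNr : ((|N|:ℤ):ℝ) = -(N:ℝ) := by
      rw [abs_of_neg hN]; push_cast; ring
    have hfinal : g * Real.sqrt (-(D:ℝ)) = 2 * Real.sqrt ((|N|:ℤ):ℝ) := by
      rw [hg, hNr, mul_assoc, ← Real.sqrt_mul (div_nonneg hg2r.le hg3r'.le)]
      rw [show (g1:ℝ) = Real.sqrt ((g1:ℝ)^2) from (Real.sqrt_sq hg1r.le).symm]
      rw [← Real.sqrt_mul (sq_nonneg _), hkey]
      rw [Real.sqrt_mul (by positivity), Real.sqrt_sq (by norm_num)]
    calc |g| * 𝒩 = g * 𝒩 := by rw [habsg]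
      _ ≤ g * Real.sqrt (-(D:ℝ)) := mul_le_mul_of_nonneg_left h𝒩le hgpos
      _ = 2 * Real.sqrt ((|N|:ℤ):ℝ) := hfinal
end

section
/- Let N be a negative integer with N/core(N) a perfect square, and define g and 𝒩_{d',4} as in the hypergeometric-method setup (with d' = 4N/g^2 and 𝒩_{d',4} = 2^{min(v_2(4N/g^2)/2, 3)}). If v_2(4N/g^2)/2 ≤ 3, then v_2(g·𝒩_{d',4}) = v_2(4N)/2; if v_2(4N/g^2)/2 ≥ 4, then v_2(g·𝒩_{d',4}) ≤ v_2(4N)/2 − 1. -/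
lemma padicValRat_two_zpow (n : ℤ) : padicValRat 2 ((2 : ℚ) ^ n) = n := by
  have h2 : padicValRat 2 (2 : ℚ) = 1 := padicValRat.self one_lt_two
  rcases le_or_gt 0 n with hn | hn
  · lift n to ℕ using hn
    rw [zpow_natCast, padicValRat.pow (2:ℚ), h2, mul_one]
  · have hn' : 0 ≤ -n := by omega
    rw [show (2:ℚ)^n = ((2:ℚ)^(-n))⁻¹ by rw [zpow_neg, inv_inv], padicValRat.inv]
    lift -n to ℕ using hn' with m hm
    rw [zpow_natCast, padicValRat.pow (2:ℚ), h2, mul_one]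
    omega

/-- The 2-adic valuation computations in Lemma 3.5, expressed through `g² = g₁²·g₂/g₃` and
`𝒩² = 2^{min(v₂(4N/g²), 6)}`: if `v₂(4N/g²) ≤ 6` then `v₂(g²·𝒩²) = v₂(4N)` (i.e.
`v₂(g·𝒩) = v₂(4N)/2`), and if `v₂(4N/g²) ≥ 8` then `v₂(g²·𝒩²) ≤ v₂(4N) - 2`
(i.e. `v₂(g·𝒩) ≤ v₂(4N)/2 - 1`). -/
theorem val_two_g_N
    (N : ℤ) (hN : N < 0)
    (t' s : ℤ) (hsf : Squarefree t') (hs : 0 < s) (hNfac : N = t' * s ^ 2)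
    (x : ℤ)
    (u1 u2 : ℤ) (hu1 : u1 = 2 * x) (hu2 : u2 = 2 * s)
    (g1 g2 g3 : ℤ)
    (hg1 : g1 = (Int.gcd u1 u2 : ℤ))
    (hg2 : g2 = (Int.gcd (u1 / g1) t' : ℤ))
    (hg3 : g3 = if t' % 4 = 1 ∧ (u1 - u2) / g1 % 2 = 0 then 1
           else if t' % 4 = 3 ∧ (u1 - u2) / g1 % 2 = 0 then 2
           else 4)
    (gsq : ℚ) (hgsq : gsq = (g1 : ℚ) ^ 2 * (g2 : ℚ) / (g3 : ℚ))
    (Nsq : ℚ) (hNsq : Nsq = (2 : ℚ) ^ (min (padicValRat 2 ((4 * N : ℚ) / gsq)) 6)) :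
    (padicValRat 2 ((4 * N : ℚ) / gsq) ≤ 6 →
      padicValRat 2 (gsq * Nsq) = padicValRat 2 ((4 * N : ℚ))) ∧
    (8 ≤ padicValRat 2 ((4 * N : ℚ) / gsq) →
      padicValRat 2 (gsq * Nsq) ≤ padicValRat 2 ((4 * N : ℚ)) - 2) := by
  have hNne : (N : ℚ) ≠ 0 := by exact_mod_cast hN.ne
  have ht' : t' ≠ 0 := by rintro rfl; simp at hNfac; omega
  have hu2ne : u2 ≠ 0 := by omega
  have hg1ne : g1 ≠ 0 := by
    rw [hg1]; exact_mod_cast (Int.gcd_pos_of_ne_zero_right u1 hu2ne).ne'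
  have hg2ne : g2 ≠ 0 := by
    rw [hg2]; exact_mod_cast (Int.gcd_pos_of_ne_zero_right _ ht').ne'
  have hg3ne : g3 ≠ 0 := by rw [hg3]; split_ifs <;> norm_num
  have hgsqne : gsq ≠ 0 := by
    rw [hgsq]
    apply div_ne_zero (mul_ne_zero (pow_ne_zero _ (by exact_mod_cast hg1ne))
      (by exact_mod_cast hg2ne)) (by exact_mod_cast hg3ne)
  have h4N : (4 * N : ℚ) ≠ 0 := mul_ne_zero (by norm_num) hNne
  have hNsqne : Nsq ≠ 0 := by rw [hNsq]; exact zpow_ne_zero _ (by norm_num)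
  have hv : padicValRat 2 ((4 * N : ℚ) / gsq)
      = padicValRat 2 ((4 * N : ℚ)) - padicValRat 2 gsq := padicValRat.div h4N hgsqne
  have hmul : padicValRat 2 (gsq * Nsq)
      = padicValRat 2 gsq + min (padicValRat 2 ((4 * N : ℚ) / gsq)) 6 := by
    rw [padicValRat.mul hgsqne hNsqne, hNsq, padicValRat_two_zpow]
  constructor
  · intro h6
    rw [hmul, min_eq_left h6]
    omega
  · intro h8
    rw [hmul, min_eq_right (by omega)]
    omega
end
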